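/- There are no positively expansive sand automata: for every sand automaton with global rule F and every ε > 0, there exist two distinct configurations x, y ∈ C such that d(F^n(x), F^n(y)) < ε for all n ∈ ℕ. -/

import Mathlib

open Filter

/-- The set `Z̃ = ℤ ∪ {−∞, +∞}` of extended integers. -/
abbrev Ztilde := WithBot (WithTop ℤ)

/-- Embedding of `ℤ` into `Z̃`. -/
def Ztilde.ofInt (z : ℤ) : Ztilde := ((z : WithTop ℤ) : WithBot (WithTop ℤ))

/-- The underlying integer of a finite extended integer (0 on `±∞`). -/
def Ztilde.toInt (n : Ztilde) : ℤ := (n.unbotD 0).untopD 0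

/-- The sand-automata configuration space `C = Z̃^(ℤ^d)`. -/
abbrev Conf (d : ℕ) := (Fin d → ℤ) → Ztilde

/-- `ζ : C → {0,1}^(ℤ^(d+1))`, `ζ(x)_(i,k) = 1` iff `x_i ≥ k`. -/
noncomputable def zeta {d : ℕ} (x : Conf d) : (Fin d → ℤ) × ℤ → Bool :=
  fun j => decide (Ztilde.ofInt j.2 ≤ x j.1)

/-- The subshift `S_K`: configurations with no `0` below a `1` in a column. -/
def SK (d : ℕ) : Set ((Fin d → ℤ) × ℤ → Bool) :=
  {y | ∀ (i : Fin d → ℤ) (k : ℤ), y (i, k + 1) = true → y (i, k) = true}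

/-- The sup-norm `|j|_∞` of an index in `ℤ^(d+1) = ℤ^d × ℤ`. -/
def idxNorm {d : ℕ} (j : (Fin d → ℤ) × ℤ) : ℕ :=
  max (Finset.univ.sup fun t => (j.1 t).natAbs) j.2.natAbs

open scoped Classical in
/-- The distance `d(x,y) = 2^(−min{|j|_∞ : ζ(x)_j ≠ ζ(y)_j})`, `0` if `x = y`. -/
noncomputable def saDist {d : ℕ} (x y : Conf d) : ℝ :=
  if x = y then 0
  else (2 : ℝ) ^ (-((sInf {n : ℕ | ∃ j, idxNorm j = n ∧ zeta x j ≠ zeta y j} : ℕ) : ℤ))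

/-- The measuring device `β_r^m`. -/
noncomputable def beta (r : ℕ) (m : ℤ) (n : Ztilde) : Ztilde :=
  if Ztilde.ofInt (m + r) < n then ⊤
  else if n < Ztilde.ofInt (m - r) then ⊥
  else Ztilde.ofInt (n.toInt - m)

/-- The neighborhood `[−r,r]^d \ {0}` of a sand automaton of radius `r`. -/
def Nbhd (d r : ℕ) := {k : Fin d → ℤ // (∀ t, (k t).natAbs ≤ r) ∧ k ≠ 0}

/-- The range `R_r^i(x)` of center `i` and radius `r`. -/
noncomputable def saRange {d : ℕ} (r : ℕ) (x : Conf d) (i : Fin d → ℤ) : Nbhd d r → Ztilde :=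
  fun k => beta r (x i).toInt (x (i + k.1))

/-- A sand automaton of dimension `d`: a radius `r` and a local rule `f`
taking values in `{−r,…,r}`. -/
structure SandAutomaton (d : ℕ) where
  r : ℕ
  f : (Nbhd d r → Ztilde) → ℤ
  f_mem : ∀ R, (f R).natAbs ≤ r

/-- The global rule `F : C → C` of a sand automaton. -/
noncomputable def SandAutomaton.global {d : ℕ} (S : SandAutomaton d) (x : Conf d) : Conf d :=
  fun i => if x i = ⊤ ∨ x i = ⊥ then x i
    else Ztilde.ofInt ((x i).toInt + S.f (saRange S.r x i))

/-- The shift map `σ^k`. -/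
def shift {d : ℕ} (k : Fin d → ℤ) (x : Conf d) : Conf d := fun i => x (i + k)

/-- The raising map `ρ`. -/
def raise {d : ℕ} (x : Conf d) : Conf d :=
  fun i => if x i = ⊤ ∨ x i = ⊥ then x i else Ztilde.ofInt ((x i).toInt + 1)

/-- A map `F : C → C` is infinity-preserving. -/
def InfinityPreserving {d : ℕ} (F : Conf d → Conf d) : Prop :=
  ∀ (x : Conf d) (i : Fin d → ℤ),
    (F x i = ⊤ ↔ x i = ⊤) ∧ (F x i = ⊥ ↔ x i = ⊥)

/-! A sand automaton moves every flat configuration `c` uniformly, to the flat configuration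
`c + a` where `a` is the value of the local rule on the flat range. Hence the flat configurations
`c` and `c + 1` stay flat with the same drift `a` forever, and they only differ in the layer of
height `c + n a + 1`. Starting at a height `c` far from `0` on the side towards which `a` pushes,
that layer never comes near the origin, so the two orbits stay close. -/

namespace Ztilde

@[simp]
lemma toInt_ofInt (z : ℤ) : (ofInt z).toInt = z := rfl

@[simp]
lemma ofInt_ne_top (z : ℤ) : ofInt z ≠ ⊤ := by
  simp [ofInt]

@[simp]
lemma ofInt_ne_bot (z : ℤ) : ofInt z ≠ ⊥ := by
  simp [ofInt]

@[simp]
lemma ofInt_le_ofInt {a b : ℤ} : ofInt a ≤ ofInt b ↔ a ≤ b := by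
  simp [ofInt]

@[simp]
lemma ofInt_lt_ofInt {a b : ℤ} : ofInt a < ofInt b ↔ a < b := by
  simp [ofInt]

@[simp]
lemma ofInt_inj {a b : ℤ} : ofInt a = ofInt b ↔ a = b := by
  simp [ofInt]

end Ztilde

open Ztilde

section Flat

variable {d : ℕ}

def constConf (d : ℕ) (c : ℤ) : Conf d := fun _ => ofInt c

lemma constConf_ne_constConf {b c : ℤ} (h : b ≠ c) : constConf d b ≠ constConf d c :=
  fun hbc => h (ofInt_inj.mp (congrFun hbc 0))

lemma beta_self (r : ℕ) (m : ℤ) : beta r m (ofInt m) = ofInt 0 := by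
  simp only [beta, ofInt_lt_ofInt, toInt_ofInt]
  rw [if_neg (by omega), if_neg (by omega), sub_self]

lemma saRange_constConf (r : ℕ) (c : ℤ) (i : Fin d → ℤ) :
    saRange r (constConf d c) i = fun _ => ofInt 0 := by
  funext k
  exact beta_self r c

lemma SandAutomaton.global_constConf (S : SandAutomaton d) (c : ℤ) :
    S.global (constConf d c) = constConf d (c + S.f fun _ => ofInt 0) := by
  funext i
  simp [SandAutomaton.global, saRange_constConf, constConf]

lemma SandAutomaton.iterate_global_constConf (S : SandAutomaton d) (c : ℤ) (n : ℕ) :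
    S.global^[n] (constConf d c) = constConf d (c + n * S.f fun _ => ofInt 0) := by
  induction n with
  | zero => simp
  | succ n ih =>
    rw [Function.iterate_succ_apply', ih, S.global_constConf]
    push_cast
    ring_nf

lemma zeta_constConf (c : ℤ) (j : (Fin d → ℤ) × ℤ) :
    zeta (constConf d c) j = decide (j.2 ≤ c) := by
  simp [zeta, constConf]

lemma zeta_constConf_ne_iff (c : ℤ) (j : (Fin d → ℤ) × ℤ) :
    zeta (constConf d c) j ≠ zeta (constConf d (c + 1)) j ↔ j.2 = c + 1 := by
  rw [zeta_constConf, zeta_constConf]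
  by_cases h₁ : j.2 ≤ c <;> by_cases h₂ : j.2 ≤ c + 1 <;> simp [h₁, h₂] <;> omega

end Flat

lemma saDist_le_of_le_idxNorm {d : ℕ} {x y : Conf d} {M : ℕ}
    (hne : ∃ j, zeta x j ≠ zeta y j) (hM : ∀ j, zeta x j ≠ zeta y j → M ≤ idxNorm j) :
    saDist x y ≤ 2 ^ (-(M : ℤ)) := by
  classical
  obtain ⟨j₀, hj₀⟩ := hne
  have hxy : x ≠ y := by
    rintro rfl
    exact hj₀ rfl
  rw [saDist, if_neg hxy]
  obtain ⟨j, hj, hjne⟩ :=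
    Nat.sInf_mem (s := {n : ℕ | ∃ j, idxNorm j = n ∧ zeta x j ≠ zeta y j}) ⟨_, j₀, rfl, hj₀⟩
  refine zpow_le_zpow_right₀ one_le_two (neg_le_neg ?_)
  exact_mod_cast hj ▸ hM j hjne

lemma saDist_constConf_add_one_le {d : ℕ} (c : ℤ) :
    saDist (constConf d c) (constConf d (c + 1)) ≤ 2 ^ (-((c + 1).natAbs : ℤ)) := by
  refine saDist_le_of_le_idxNorm ⟨(0, c + 1), (zeta_constConf_ne_iff c _).mpr rfl⟩ ?_
  intro j hj
  rw [zeta_constConf_ne_iff] at hj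
  exact hj ▸ le_max_right _ _

theorem no_positively_expansive_sa_general (d : ℕ) (S : SandAutomaton d)
    (ε : ℝ) (hε : 0 < ε) :
    ∃ x y : Conf d, x ≠ y ∧ ∀ n : ℕ, saDist (S.global^[n] x) (S.global^[n] y) < ε := by
  obtain ⟨M, hM⟩ := exists_pow_lt_of_lt_one hε (by norm_num : (2⁻¹ : ℝ) < 1)
  set a : ℤ := S.f fun _ => ofInt 0
  set c : ℤ := if 0 ≤ a then M else -M - 1
  have hfar (n : ℕ) : M ≤ (c + n * a + 1).natAbs := by
    rcases le_or_gt 0 a with ha | ha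
    · have : 0 ≤ (n : ℤ) * a := mul_nonneg n.cast_nonneg ha
      simp only [c, if_pos ha]
      omega
    · have : (n : ℤ) * a ≤ 0 := mul_nonpos_of_nonneg_of_nonpos n.cast_nonneg ha.le
      simp only [c, if_neg ha.not_ge]
      omega
  refine ⟨constConf d c, constConf d (c + 1), constConf_ne_constConf (by omega), fun n => ?_⟩
  rw [S.iterate_global_constConf, S.iterate_global_constConf, add_right_comm]
  calc saDist _ _ ≤ 2 ^ (-((c + n * a + 1).natAbs : ℤ)) := saDist_constConf_add_one_le _
    _ ≤ 2 ^ (-(M : ℤ)) := zpow_le_zpow_right₀ one_le_two (by have := hfar n; omega)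
    _ = 2⁻¹ ^ M := by rw [zpow_neg, zpow_natCast, inv_pow]
    _ < ε := hM

/-- There are no positively expansive sand automata: for every
sand automaton `F` and every `ε > 0` there are two distinct configurations whose
orbits stay forever at distance `< ε`. -/
theorem no_positively_expansive_sa (d : ℕ) (hd : 1 ≤ d) (S : SandAutomaton d)
    (ε : ℝ) (hε : 0 < ε) :
    ∃ x y : Conf d, x ≠ y ∧ ∀ n : ℕ, saDist (S.global^[n] x) (S.global^[n] y) < ε :=
  no_positively_expansive_sa_general d S ε hε
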